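/- arXiv:math/0307029 — 3 statements merged into one kernel-verified Lean document; each statement's English description precedes it below -/
import Mathlib

section
/- Let g ≥ 1 and let Δ = ∑_{j=-g}^{g} a_j U^j be a symmetric Laurent polynomial with integer coefficients (a_{-j} = a_j for all j) whose top coefficient a_g is nonzero. For an integer q ≥ 1 define S_q := (X^{(-1,0)} − X^{(1,0)})^{2g} · ∑_{j=-g}^{g} a_j X^{(2j, 2jq)} ∈ ℤ[ℤ × ℤ]. Then every pair (a,b) ∈ ℤ × ℤ in the support of S_q satisfies |b| ≤ 2gq and |a| ≤ 4g, and the maximum of |b| over the support of S_q is exactly 2gq (it is attained at (0, 2gq)). -/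
/-!
Write `S_q = A ^ (2g) * B` with `A = X^{(-1,0)} - X^{(1,0)}` and `B = ∑ a_j X^{(2j, 2jq)}`.
Supports add under multiplication, so the box bounds `|a| ≤ 2g, b = 0` for `A ^ (2g)` and
`|a| ≤ 2g, |b| ≤ 2gq` for `B` give the box bound for `S_q`. In the product, `(0, 2gq)` is
reached only as `(-2g, 0) + (2g, 2gq)`: the second coordinate forces `j = g`. Its coefficient
is therefore the product of the extreme coefficients `1` of `A ^ (2g)` and `a_g` of `B`.
-/

open AddMonoidAlgebra Finset

lemma supDegree_single_le {R A B : Type*} [Semiring R] [SemilatticeSup B] [OrderBot B]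
    (D : A → B) (p : A) (r : R) : (single p r).supDegree D ≤ D p :=
  Finset.sup_le fun _ hx => (Finset.mem_singleton.mp (Finsupp.support_single_subset hx)) ▸ le_rfl

/-- Valued in `WithBot` because `supDegree` needs an `OrderBot`. -/
def absDeg (p : ℤ × ℤ) : WithBot (ℤ × ℤ) := ↑(|p.1|, |p.2|)

lemma absDeg_le_coe {p : ℤ × ℤ} {r s : ℤ} :
    absDeg p ≤ ↑(r, s) ↔ |p.1| ≤ r ∧ |p.2| ≤ s := by
  rw [absDeg, WithBot.coe_le_coe, Prod.mk_le_mk]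

lemma absDeg_add_le (p p' : ℤ × ℤ) : absDeg (p + p') ≤ absDeg p + absDeg p' := by
  unfold absDeg
  rw [← WithBot.coe_add, WithBot.coe_le_coe, Prod.mk_add_mk, Prod.mk_le_mk]
  exact ⟨abs_add_le _ _, abs_add_le _ _⟩

lemma abs_le_of_mem_support {R : Type*} [Semiring R] {f : AddMonoidAlgebra R (ℤ × ℤ)}
    {r s : ℤ} (hf : f.supDegree absDeg ≤ ↑(r, s)) {p : ℤ × ℤ} (hp : p ∈ f.coeff.support) :
    |p.1| ≤ r ∧ |p.2| ≤ s :=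
  absDeg_le_coe.mp ((Finset.le_sup hp).trans hf)

section

variable {R : Type*} [Ring R]

variable (R) in
noncomputable def xiInvSubXi : AddMonoidAlgebra R (ℤ × ℤ) :=
  of' R (ℤ × ℤ) (-1, 0) - of' R (ℤ × ℤ) (1, 0)

/-- `Δ(ξ² τ^{2q})` for `Δ = ∑_{j=-g}^{g} a_j U^j`, with `ξ = X^{(1,0)}`, `τ = X^{(0,1)}`. -/
noncomputable def alexanderSubst (a : ℤ → R) (g : ℕ) (q : ℤ) :
    AddMonoidAlgebra R (ℤ × ℤ) :=
  ∑ j ∈ Icc (-(g : ℤ)) g, a j • of' R (ℤ × ℤ) (2 * j, 2 * j * q)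

lemma supDegree_xiInvSubXi_le : (xiInvSubXi R).supDegree absDeg ≤ ↑((1 : ℤ), (0 : ℤ)) := by
  refine supDegree_sub_le.trans (sup_le ?_ ?_) <;>
    refine (supDegree_single_le _ _ _).trans (absDeg_le_coe.mpr ?_) <;> simp

lemma supDegree_xiInvSubXi_pow_le (n : ℕ) :
    (xiInvSubXi R ^ n).supDegree absDeg ≤ ↑((n : ℤ), (0 : ℤ)) := by
  refine (sup_support_pow_le (absDeg_le_coe.mpr (by simp)) absDeg_add_le n _).trans ?_
  refine (nsmul_le_nsmul_right supDegree_xiInvSubXi_le n).trans_eq ?_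
  rw [← WithBot.coe_nsmul, Prod.smul_mk]
  simp

lemma supDegree_alexanderSubst_le (a : ℤ → R) (g : ℕ) {q : ℤ} (hq : 0 ≤ q) :
    (alexanderSubst a g q).supDegree absDeg ≤ ↑(2 * (g : ℤ), 2 * (g : ℤ) * q) := by
  refine supDegree_sum_le.trans (Finset.sup_le fun j hj => ?_)
  rw [of'_apply, smul_single', mul_one]
  refine (supDegree_single_le _ _ _).trans (absDeg_le_coe.mpr ?_)
  obtain ⟨hj₁, hj₂⟩ := Finset.mem_Icc.mp hj
  have hj : |2 * j| ≤ 2 * g := abs_le.mpr ⟨by omega, by omega⟩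
  refine ⟨hj, ?_⟩
  rw [abs_mul, abs_of_nonneg hq]
  exact mul_le_mul_of_nonneg_right hj hq

lemma supDegree_xiInvSubXi_pow_mul_alexanderSubst_le (a : ℤ → R) (g n : ℕ) {q : ℤ}
    (hq : 0 ≤ q) : (xiInvSubXi R ^ n * alexanderSubst a g q).supDegree absDeg ≤
      ↑((n : ℤ) + 2 * g, 2 * g * q) := by
  refine (sup_support_coeff_mul_le absDeg_add_le _ _).trans ?_
  refine (add_le_add (supDegree_xiInvSubXi_pow_le n)
    (supDegree_alexanderSubst_le a g hq)).trans_eq ?_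
  rw [← WithBot.coe_add, Prod.mk_add_mk, zero_add]

lemma support_alexanderSubst_subset (a : ℤ → R) (g : ℕ) (q : ℤ) :
    (alexanderSubst a g q).coeff.support ⊆
      (Icc (-(g : ℤ)) g).image fun j => (2 * j, 2 * j * q) := by
  classical
  rw [alexanderSubst, coeff_sum]
  refine Finsupp.support_finsetSum.trans (Finset.biUnion_subset.mpr fun j hj => ?_)
  rw [of'_apply, smul_single', coeff_single]
  exact Finsupp.support_single_subset.trans (singleton_subset_iff.mpr (mem_image_of_mem _ hj))

lemma coeff_alexanderSubst_top (a : ℤ → R) (g : ℕ) (q : ℤ) :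
    (alexanderSubst a g q).coeff (2 * g, 2 * g * q) = a g := by
  rw [alexanderSubst, coeff_sum, Finsupp.finsetSum_apply, sum_eq_single (g : ℤ)]
  · simp [of'_apply]
  · intro j _ hj
    rw [of'_apply, smul_single', coeff_single, Finsupp.single_eq_of_ne]
    intro h
    exact hj (by linarith [(Prod.mk.inj h).1])
  · intro hg
    exact absurd (mem_Icc.mpr ⟨by omega, le_rfl⟩) hg

lemma coeff_xiInvSubXi_neg_one : (xiInvSubXi R).coeff (-1, 0) = 1 := by
  simp [xiInvSubXi, of'_apply, coeff_single]

lemma coeff_xiInvSubXi_pow_neg (n : ℕ) : (xiInvSubXi R ^ n).coeff (-n, 0) = 1 := by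
  induction n with
  | zero => simp [one_def, coeff_single, Finsupp.single_apply, Prod.ext_iff]
  | succ n ih =>
    have hsplit : (-((n + 1 : ℕ) : ℤ), (0 : ℤ)) = (-(n : ℤ), 0) + (-1, 0) := by
      simp only [Prod.mk_add_mk, add_zero]; push_cast; ring_nf
    rw [pow_succ, hsplit, coeff_mul_add_of_uniqueAdd, ih, coeff_xiInvSubXi_neg_one, mul_one]
    intro x y hx hy hxy
    obtain ⟨hx₁, hx₂⟩ := abs_le_of_mem_support (supDegree_xiInvSubXi_pow_le n) hx
    obtain ⟨hy₁, hy₂⟩ := abs_le_of_mem_support supDegree_xiInvSubXi_le hy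
    have h₁ := congrArg Prod.fst hxy
    simp only [Prod.fst_add] at h₁
    rw [abs_le] at hx₁ hy₁
    rw [abs_nonpos_iff] at hx₂ hy₂
    exact ⟨Prod.ext (by dsimp only; omega) hx₂, Prod.ext (by dsimp only; omega) hy₂⟩

lemma coeff_xiInvSubXi_pow_mul_alexanderSubst (a : ℤ → R) (g n : ℕ) {q : ℤ} (hq : q ≠ 0) :
    (xiInvSubXi R ^ n * alexanderSubst a g q).coeff (2 * g - n, 2 * g * q) = a g := by
  have hsplit : ((2 * g - n : ℤ), 2 * g * q) = (-(n : ℤ), 0) + (2 * (g : ℤ), 2 * g * q) := by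
    simp only [Prod.mk_add_mk, zero_add]; ring_nf
  rw [hsplit, coeff_mul_add_of_uniqueAdd, coeff_xiInvSubXi_pow_neg, coeff_alexanderSubst_top,
    one_mul]
  intro x y hx hy hxy
  obtain ⟨-, hx₂⟩ := abs_le_of_mem_support (supDegree_xiInvSubXi_pow_le n) hx
  obtain ⟨j, -, rfl⟩ := mem_image.mp (support_alexanderSubst_subset a g q hy)
  rw [abs_nonpos_iff] at hx₂
  obtain ⟨h₁, h₂⟩ := Prod.ext_iff.mp hxy
  simp only [Prod.fst_add, Prod.snd_add, hx₂, zero_add] at h₁ h₂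
  obtain rfl : j = g := mul_right_cancel₀ hq (by linarith)
  exact ⟨Prod.ext (by linarith) hx₂, rfl⟩

end

theorem support_bounds_and_max_general
    (g : ℕ) (a : ℤ → ℤ)
    (htop : a (g : ℤ) ≠ 0)
    (q : ℤ) (hq : 1 ≤ q)
    (S : AddMonoidAlgebra ℤ (ℤ × ℤ))
    (hS : S = (AddMonoidAlgebra.of' ℤ (ℤ × ℤ) (-1, 0)
              - AddMonoidAlgebra.of' ℤ (ℤ × ℤ) (1, 0)) ^ (2 * g)
            * ∑ j ∈ Finset.Icc (-(g : ℤ)) (g : ℤ),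
                a j • AddMonoidAlgebra.of' ℤ (ℤ × ℤ) (2 * j, 2 * j * q)) :
    (∀ p ∈ S.coeff.support, |p.2| ≤ 2 * (g : ℤ) * q ∧ |p.1| ≤ 4 * (g : ℤ)) ∧
      ((0 : ℤ), 2 * (g : ℤ) * q) ∈ S.coeff.support := by
  change S = xiInvSubXi ℤ ^ (2 * g) * alexanderSubst a g q at hS
  subst hS
  refine ⟨fun p hp => ?_, ?_⟩
  · obtain ⟨hp₁, hp₂⟩ := abs_le_of_mem_support
      (supDegree_xiInvSubXi_pow_mul_alexanderSubst_le a g (2 * g) (by omega)) hp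
    exact ⟨hp₂, by push_cast at hp₁; linarith⟩
  · have hcoeff := coeff_xiInvSubXi_pow_mul_alexanderSubst a g (2 * g) (by omega : q ≠ 0)
    push_cast at hcoeff
    rw [sub_self] at hcoeff
    rwa [Finsupp.mem_support_iff, hcoeff]

/-- With `S_q := (X^{(-1,0)} − X^{(1,0)})^{2g} · ∑_{j=-g}^{g} a_j X^{(2j,2jq)}`
in `ℤ[ℤ × ℤ]`, where `g ≥ 1`, `q ≥ 1`, the coefficients `a_j` are symmetric and `a_g ≠ 0`:
every `(a,b)` in the support of `S_q` satisfies `|b| ≤ 2gq` and `|a| ≤ 4g`, and the maximum of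
`|b|` over the support is exactly `2gq`, attained at `(0, 2gq)`. -/
theorem support_bounds_and_max
    (g : ℕ) (hg : 1 ≤ g) (a : ℤ → ℤ)
    (hsym : ∀ j : ℤ, a (-j) = a j) (htop : a (g : ℤ) ≠ 0)
    (q : ℤ) (hq : 1 ≤ q)
    (S : AddMonoidAlgebra ℤ (ℤ × ℤ))
    (hS : S = (AddMonoidAlgebra.of' ℤ (ℤ × ℤ) (-1, 0)
              - AddMonoidAlgebra.of' ℤ (ℤ × ℤ) (1, 0)) ^ (2 * g)
            * ∑ j ∈ Finset.Icc (-(g : ℤ)) (g : ℤ),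
                a j • AddMonoidAlgebra.of' ℤ (ℤ × ℤ) (2 * j, 2 * j * q)) :
    (∀ p ∈ S.coeff.support, |p.2| ≤ 2 * (g : ℤ) * q ∧ |p.1| ≤ 4 * (g : ℤ)) ∧
      ((0 : ℤ), 2 * (g : ℤ) * q) ∈ S.coeff.support :=
  support_bounds_and_max_general g a htop q hq S hS
end

section
/- Let g ≥ 1 and let Δ = ∑_{j=-g}^{g} a_j U^j be a symmetric Laurent polynomial with integer coefficients (a_{-j} = a_j for all j) whose top coefficient a_g is nonzero. For an integer q ≥ 1 define S_q := (X^{(-1,0)} − X^{(1,0)})^{2g} · ∑_{j=-g}^{g} a_j X^{(2j, 2jq)} ∈ ℤ[ℤ × ℤ]. Define the divisibility of a pair (a,b) ∈ ℤ × ℤ as gcd(|a|, |b|) (with gcd(0,n) = n). Then the maximum of the divisibilities of the elements of the support of S_q is exactly 2gq: every (a,b) in the support satisfies gcd(|a|,|b|) ≤ 2gq, and the element (0, 2gq) lies in the support and has divisibility 2gq. -/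
/-!
Write `D = X^{(-1,0)} - X^{(1,0)}`. Every monomial of `D^{2g}` is horizontal, `(k, 0)` with
`|k| ≤ 2g`, so a monomial of `S_q` is `(k + 2j, 2jq)` with `|j| ≤ g`: its divisibility is at most
`|2jq| ≤ 2gq`, or `|k| ≤ 2g ≤ 2gq` when `j = 0`. The coefficient of `(0, 2gq)` only receives the
term `j = g` (any other `j` has the wrong second coordinate) paired with the extreme monomial
`X^{(-2g,0)}` of `D^{2g}`, whose coefficient is `1`; hence it equals `a_g ≠ 0`.
-/

open AddMonoidAlgebra

namespace AddMonoidAlgebra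

variable {R : Type*}

theorem le_of_mem_support_coeff_pow [Semiring R] {A : Type*} [AddMonoid A] (ν : A → ℕ)
    (hν₀ : ν 0 = 0) (hν_add : ∀ a b, ν (a + b) ≤ ν a + ν b) {f : R[A]} {c : ℕ}
    (hf : ∀ a ∈ f.coeff.support, ν a ≤ c) (n : ℕ) {a : A} (ha : a ∈ (f ^ n).coeff.support) :
    ν a ≤ n * c :=
  calc ν a ≤ (f ^ n).coeff.support.sup ν := Finset.le_sup ha
    _ ≤ n • f.coeff.support.sup ν := sup_support_pow_le hν₀.le hν_add n f
    _ ≤ n * c := Nat.mul_le_mul_left n (Finset.sup_le hf)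

theorem exists_eq_of_mem_support_coeff_sum_smul_of' [Semiring R] {G ι : Type*}
    [AddMonoid G] [DecidableEq G] {s : Finset ι} {c : ι → R} {v : ι → G} {p : G}
    (hp : p ∈ (∑ i ∈ s, c i • of' R G (v i)).coeff.support) : ∃ i ∈ s, p = v i := by
  rw [coeff_sum] at hp
  obtain ⟨i, hi, hpi⟩ := Finset.mem_biUnion.1 (Finsupp.support_finsetSum hp)
  exact ⟨i, hi, Finset.mem_singleton.1 (Finsupp.support_single_subset (Finsupp.support_smul hpi))⟩

theorem coeff_mul_of' [Semiring R] {G : Type*} [AddGroup G] (f : R[G]) (g h : G) :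
    (f * of' R G g).coeff h = f.coeff (h - g) := by
  simp [of', coeff_mul_single_apply, sub_eq_add_neg]

theorem coeff_mul_sum_smul_of' [Semiring R] {G ι : Type*} [AddGroup G] (f : R[G])
    (s : Finset ι) (c : ι → R) (v : ι → G) (p : G) :
    (f * ∑ i ∈ s, c i • of' R G (v i)).coeff p = ∑ i ∈ s, f.coeff (p - v i) * c i := by
  simp [Finset.mul_sum, coeff_sum, sub_eq_add_neg]

variable [Ring R]

theorem snd_eq_zero_and_natAbs_fst_le_of_mem_support_pow_of'_sub_of' (n : ℕ) {p : ℤ × ℤ}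
    (hp : p ∈ ((of' R (ℤ × ℤ) (-1, 0) - of' R (ℤ × ℤ) (1, 0)) ^ n).coeff.support) :
    p.2 = 0 ∧ p.1.natAbs ≤ n := by
  classical
  have hD : ∀ a ∈ (of' R (ℤ × ℤ) (-1, 0) - of' R (ℤ × ℤ) (1, 0)).coeff.support,
      a = (-1, 0) ∨ a = (1, 0) := by
    intro a ha
    rcases Finset.mem_union.1 (Finsupp.support_sub ha) with h | h
    · exact .inl (Finset.mem_singleton.1 (Finsupp.support_single_subset h))
    · exact .inr (Finset.mem_singleton.1 (Finsupp.support_single_subset h))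
  constructor
  · simpa using le_of_mem_support_coeff_pow (fun a : ℤ × ℤ => a.2.natAbs) rfl
      (fun a b => Int.natAbs_add_le a.2 b.2) (c := 0)
      (fun a ha => by rcases hD a ha with rfl | rfl <;> rfl) n hp
  · simpa using le_of_mem_support_coeff_pow (fun a : ℤ × ℤ => a.1.natAbs) rfl
      (fun a b => Int.natAbs_add_le a.1 b.1) (c := 1)
      (fun a ha => by rcases hD a ha with rfl | rfl <;> rfl) n hp

theorem coeff_pow_of'_sub_of'_neg (n : ℕ) :
    ((of' R (ℤ × ℤ) (-1, 0) - of' R (ℤ × ℤ) (1, 0)) ^ n).coeff (-(n : ℤ), 0) = 1 := by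
  induction n with
  | zero => simp [one_def, Prod.mk_zero_zero]
  | succ n ih =>
    have h_out : ((of' R (ℤ × ℤ) (-1, 0) - of' R (ℤ × ℤ) (1, 0)) ^ n).coeff
        (-(n : ℤ) - 2, 0) = 0 :=
      Finsupp.notMem_support_iff.1 fun h => by
        have := (snd_eq_zero_and_natAbs_fst_le_of_mem_support_pow_of'_sub_of' n h).2
        omega
    have h_left : ((-((n + 1 : ℕ) : ℤ), 0) - (-1, 0) : ℤ × ℤ) = (-(n : ℤ), 0) := by
      ext <;> simp
    have h_right : ((-((n + 1 : ℕ) : ℤ), 0) - (1, 0) : ℤ × ℤ) = (-(n : ℤ) - 2, 0) := by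
      ext <;> simp; omega
    rw [pow_succ, mul_sub, coeff_sub, Finsupp.sub_apply, coeff_mul_of', coeff_mul_of', h_left,
      h_right, ih, h_out, sub_zero]

end AddMonoidAlgebra

theorem Int.gcd_le_of_abs_le {a b N : ℤ} (ha : b = 0 → |a| ≤ N) (hb : |b| ≤ N) :
    (Int.gcd a b : ℤ) ≤ N := by
  rcases eq_or_ne b 0 with rfl | hb₀
  · simpa [Int.gcd_zero_right] using ha rfl
  · exact (Int.le_of_dvd (abs_pos.2 hb₀) ((dvd_abs _ _).2 (Int.gcd_dvd_right _ _))).trans hb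

noncomputable def seibergWitten (g : ℕ) (a : ℤ → ℤ) (q : ℤ) : AddMonoidAlgebra ℤ (ℤ × ℤ) :=
  (of' ℤ (ℤ × ℤ) (-1, 0) - of' ℤ (ℤ × ℤ) (1, 0)) ^ (2 * g) *
    ∑ j ∈ Finset.Icc (-(g : ℤ)) g, a j • of' ℤ (ℤ × ℤ) (2 * j, 2 * j * q)

theorem gcd_le_of_mem_support_seibergWitten (g : ℕ) (a : ℤ → ℤ) {q : ℤ} (hq : 1 ≤ q)
    {p : ℤ × ℤ} (hp : p ∈ (seibergWitten g a q).coeff.support) :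
    (Int.gcd p.1 p.2 : ℤ) ≤ 2 * g * q := by
  obtain ⟨⟨x₁, x₂⟩, hx, y, hy, rfl⟩ := Finset.mem_add.1 (support_coeff_mul_subset _ _ hp)
  obtain ⟨j, hj, rfl⟩ := exists_eq_of_mem_support_coeff_sum_smul_of' hy
  obtain ⟨rfl, hx₁⟩ := snd_eq_zero_and_natAbs_fst_le_of_mem_support_pow_of'_sub_of' (2 * g) hx
  have hj_abs : |j| ≤ g := abs_le.2 (Finset.mem_Icc.1 hj)
  simp only [Prod.mk_add_mk, zero_add]
  refine Int.gcd_le_of_abs_le (fun h => ?_) ?_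
  · obtain rfl : j = 0 := by rcases mul_eq_zero.1 h with h | h <;> omega
    calc |x₁ + 2 * 0| = x₁.natAbs := by rw [mul_zero, add_zero, Int.abs_eq_natAbs]
      _ ≤ 2 * g * 1 := by omega
      _ ≤ 2 * g * q := by gcongr
  · rw [abs_mul, abs_mul, abs_two, abs_of_pos (by omega : 0 < q)]
    gcongr

theorem coeff_seibergWitten_top (g : ℕ) (a : ℤ → ℤ) {q : ℤ} (hq : q ≠ 0) :
    (seibergWitten g a q).coeff (0, 2 * g * q) = a g := by
  rw [seibergWitten, coeff_mul_sum_smul_of', Finset.sum_eq_single_of_mem (g : ℤ) (by simp)]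
  · have h_corner :
        (((0 : ℤ), 2 * g * q) - (2 * (g : ℤ), 2 * g * q)) = (-((2 * g : ℕ) : ℤ), 0) := by
      ext <;> simp
    rw [h_corner, coeff_pow_of'_sub_of'_neg, one_mul]
  · intro j _ hj
    refine mul_eq_zero_of_left (Finsupp.notMem_support_iff.1 fun h => hj ?_) _
    have h₂ := (snd_eq_zero_and_natAbs_fst_le_of_mem_support_pow_of'_sub_of' _ h).1
    have : (g - j) * q = 0 := by simp only [Prod.snd_sub] at h₂; linarith
    simp only [mul_eq_zero, hq, or_false] at this
    omega

theorem max_divisibility_of_support_general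
    (g : ℕ) (a : ℤ → ℤ)
    (htop : a (g : ℤ) ≠ 0)
    (q : ℤ) (hq : 1 ≤ q)
    (S : AddMonoidAlgebra ℤ (ℤ × ℤ))
    (hS : S = (AddMonoidAlgebra.of' ℤ (ℤ × ℤ) (-1, 0)
              - AddMonoidAlgebra.of' ℤ (ℤ × ℤ) (1, 0)) ^ (2 * g)
            * ∑ j ∈ Finset.Icc (-(g : ℤ)) (g : ℤ),
                a j • AddMonoidAlgebra.of' ℤ (ℤ × ℤ) (2 * j, 2 * j * q)) :
    (∀ p ∈ S.coeff.support, (Int.gcd p.1 p.2 : ℤ) ≤ 2 * (g : ℤ) * q) ∧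
      ((0 : ℤ), 2 * (g : ℤ) * q) ∈ S.coeff.support ∧
      (Int.gcd 0 (2 * (g : ℤ) * q) : ℤ) = 2 * (g : ℤ) * q := by
  subst hS
  refine ⟨fun p hp => gcd_le_of_mem_support_seibergWitten g a hq hp, ?_, ?_⟩
  · exact Finsupp.mem_support_iff.2 ((coeff_seibergWitten_top g a (by omega)).trans_ne htop)
  · rw [Int.gcd_zero_left, Int.natAbs_of_nonneg (by positivity)]

/-- With `S_q := (X^{(-1,0)} − X^{(1,0)})^{2g} · ∑_{j=-g}^{g} a_j X^{(2j,2jq)}`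
in `ℤ[ℤ × ℤ]`, where `g ≥ 1`, `q ≥ 1`, the coefficients `a_j` are symmetric and `a_g ≠ 0`:
the maximal divisibility `gcd(|a|,|b|)` of an element `(a,b)` of the support of `S_q` is
exactly `2gq`; it is attained at `(0, 2gq)`, which lies in the support. -/
theorem max_divisibility_of_support
    (g : ℕ) (hg : 1 ≤ g) (a : ℤ → ℤ)
    (hsym : ∀ j : ℤ, a (-j) = a j) (htop : a (g : ℤ) ≠ 0)
    (q : ℤ) (hq : 1 ≤ q)
    (S : AddMonoidAlgebra ℤ (ℤ × ℤ))
    (hS : S = (AddMonoidAlgebra.of' ℤ (ℤ × ℤ) (-1, 0)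
              - AddMonoidAlgebra.of' ℤ (ℤ × ℤ) (1, 0)) ^ (2 * g)
            * ∑ j ∈ Finset.Icc (-(g : ℤ)) (g : ℤ),
                a j • AddMonoidAlgebra.of' ℤ (ℤ × ℤ) (2 * j, 2 * j * q)) :
    (∀ p ∈ S.coeff.support, (Int.gcd p.1 p.2 : ℤ) ≤ 2 * (g : ℤ) * q) ∧
      ((0 : ℤ), 2 * (g : ℤ) * q) ∈ S.coeff.support ∧
      (Int.gcd 0 (2 * (g : ℤ) * q) : ℤ) = 2 * (g : ℤ) * q :=
  max_divisibility_of_support_general g a htop q hq S hS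
end

section
/- Let g ≥ 1 and let Δ = ∑_{j=-g}^{g} a_j U^j be a symmetric Laurent polynomial with integer coefficients (a_{-j} = a_j for all j) whose top coefficient a_g is nonzero. For an integer q ≥ 1 define S_q := (X^{(-1,0)} − X^{(1,0)})^{2g} · ∑_{j=-g}^{g} a_j X^{(2j, 2jq)} ∈ ℤ[ℤ × ℤ]. Suppose q, q' ≥ 1 and there exists a group automorphism φ of ℤ × ℤ such that the induced ring automorphism of ℤ[ℤ × ℤ] (sending X^{v} to X^{φ(v)}) maps S_{q'} to S_q. Then q = q'. -/
/-!
The lattice spanned by the differences of the exponents occurring in an element of `ℤ[ℤ × ℤ]` is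
carried onto the corresponding lattice of its image by an automorphism of `ℤ × ℤ`, so its index is
an invariant. The ring map induced by `(x, y) ↦ (x, q y)` sends `S_1` to `S_q`, hence the index
for `S_q` is `|q|` times the index for `S_1`. The latter is finite: expanding the binomial, the
support of `S_1` contains exponents differing by `(2, 0)` and by `(4g, 4g)`, because
`a_g = a_{-g} ≠ 0`. So `|q| = |q'|`.
-/

open Finset AddMonoidAlgebra Pointwise

namespace AddMonoidAlgebra

theorem coeff_sum_single_of_injOn {R G ι : Type*} [Semiring R] {t : Finset ι} {e : ι → G}
    (he : Set.InjOn e t) (c : ι → R) {i : ι} (hi : i ∈ t) :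
    (∑ k ∈ t, single (e k) (c k)).coeff (e i) = c i := by
  classical
  rw [coeff_sum, Finset.sum_apply', Finset.sum_eq_single_of_mem i hi]
  · simp
  · intro k hk hki
    simp [he.ne hk hi hki]

variable {R G H : Type*} [Semiring R] [AddCommGroup G] [AddCommGroup H]

def diffSpan (f : R[G]) : AddSubgroup G :=
  AddSubgroup.closure ((f.coeff.support : Set G) - f.coeff.support)

theorem diffSpan_of_support_eq_image {f : R[G]} {f' : R[H]} (ψ : G →+ H)
    (h : (f'.coeff.support : Set H) = ψ '' f.coeff.support) :
    diffSpan f' = (diffSpan f).map ψ := by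
  rw [diffSpan, diffSpan, AddMonoidHom.map_closure, Set.image_sub, h]

theorem diffSpan_mapDomain {ψ : G →+ H} (hψ : Function.Injective ψ) (f : R[G]) :
    diffSpan (f.mapDomain ψ) = (diffSpan f).map ψ := by
  classical
  refine diffSpan_of_support_eq_image ψ ?_
  simp [mapDomain, Finsupp.mapDomain_support_of_injective hψ]

theorem index_diffSpan_domCongr {R : Type*} [CommSemiring R] (φ : G ≃+ H) (f : R[G]) :
    (diffSpan (domCongr R R φ f)).index = (diffSpan f).index := by
  rw [← AddSubgroup.index_map_equiv (diffSpan f) φ]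
  refine congrArg AddSubgroup.index (diffSpan_of_support_eq_image (φ : G →+ H) ?_)
  simp [domCongr_support]

theorem sub_mem_diffSpan {f : R[G]} {v w : G} (hv : f.coeff v ≠ 0) (hw : f.coeff w ≠ 0) :
    v - w ∈ diffSpan f :=
  AddSubgroup.subset_closure (Set.sub_mem_sub (by simpa using hv) (by simpa using hw))

end AddMonoidAlgebra

theorem AddSubgroup.index_ne_zero_of_mem_of_mem {L : AddSubgroup (ℤ × ℤ)} {a b c : ℤ}
    (ha : a ≠ 0) (hc : c ≠ 0) (h₁ : (a, 0) ∈ L) (h₂ : (b, c) ∈ L) : L.index ≠ 0 := by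
  have hle : (AddSubgroup.zmultiples a).prod (AddSubgroup.zmultiples (a * c)) ≤ L := by
    rintro ⟨_, _⟩ ⟨⟨k, rfl⟩, ⟨l, rfl⟩⟩
    have hv : ((k • a, l • (a * c)) : ℤ × ℤ) = k • (a, 0) + l • (a • (b, c) - b • (a, 0)) := by
      ext <;> simp [mul_comm]
    rw [hv]
    exact L.add_mem (L.zsmul_mem h₁ k)
      (L.zsmul_mem (L.sub_mem (L.zsmul_mem h₂ a) (L.zsmul_mem h₁ b)) l)
  refine ne_zero_of_dvd_ne_zero ?_ (AddSubgroup.index_dvd_of_le hle)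
  simp [AddSubgroup.index_prod, ha, hc]

def scaleSnd (q : ℤ) : ℤ × ℤ →+ ℤ × ℤ := (AddMonoidHom.id ℤ).prodMap (zmultiplesHom ℤ q)

theorem scaleSnd_injective {q : ℤ} (hq : q ≠ 0) : Function.Injective (scaleSnd q) := by
  rintro ⟨x, y⟩ ⟨x', y'⟩ h
  simp_all [scaleSnd]

theorem index_range_scaleSnd (q : ℤ) : (scaleSnd q).range.index = q.natAbs := by
  simp [scaleSnd, AddMonoidHom.range_prodMap, AddSubgroup.index_prod,
    AddSubgroup.range_zmultiplesHom,
    AddMonoidHom.range_eq_top.mpr (fun x => ⟨x, rfl⟩ : Function.Surjective (AddMonoidHom.id ℤ))]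

noncomputable def swInvariant (n : ℕ) (s : Finset ℤ) (a : ℤ → ℤ) (q : ℤ) : ℤ[ℤ × ℤ] :=
  (of' ℤ (ℤ × ℤ) (-1, 0) - of' ℤ (ℤ × ℤ) (1, 0)) ^ n *
    ∑ j ∈ s, a j • of' ℤ (ℤ × ℤ) (2 * j, 2 * j * q)

theorem swInvariant_eq_mapDomain (n : ℕ) (s : Finset ℤ) (a : ℤ → ℤ) (q : ℤ) :
    swInvariant n s a q = (swInvariant n s a 1).mapDomain (scaleSnd q) := by
  change _ = mapDomainRingHom ℤ (scaleSnd q) _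
  rw [swInvariant, swInvariant, map_mul, map_pow, map_sub, map_sum]
  simp [of'_apply, scaleSnd]

theorem index_diffSpan_swInvariant (n : ℕ) (s : Finset ℤ) (a : ℤ → ℤ) {q : ℤ} (hq : q ≠ 0) :
    (diffSpan (swInvariant n s a q)).index = (diffSpan (swInvariant n s a 1)).index * q.natAbs := by
  rw [swInvariant_eq_mapDomain, diffSpan_mapDomain (scaleSnd_injective hq),
    AddSubgroup.index_map_of_injective _ (scaleSnd_injective hq), index_range_scaleSnd]

theorem swInvariant_eq_sum (n : ℕ) (s : Finset ℤ) (a : ℤ → ℤ) (q : ℤ) :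
    swInvariant n s a q = ∑ p ∈ range (n + 1) ×ˢ s,
      single ((n - 2 * p.1 + 2 * p.2 : ℤ), 2 * p.2 * q)
        ((-1) ^ (p.1 + n) * n.choose p.1 * a p.2) := by
  rw [swInvariant, sub_pow, sum_mul_sum, sum_product]
  refine sum_congr rfl fun m hm => sum_congr rfl fun j _ => ?_
  have hm : m ≤ n := Nat.lt_succ_iff.mp (mem_range.mp hm)
  have hsign : (-1 : ℤ[ℤ × ℤ]) ^ (m + n) = single 0 ((-1) ^ (m + n)) := by
    rw [one_def, ← single_neg, single_pow, nsmul_zero]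
  simp only [of'_apply, single_pow, one_pow, smul_single, smul_eq_mul, mul_one, hsign, natCast_def,
    single_mul_single]
  congr 1
  ext
  · simp; omega
  · simp

theorem coeff_swInvariant {n : ℕ} {s : Finset ℤ} (a : ℤ → ℤ) {q : ℤ} (hq : q ≠ 0) {m : ℕ}
    (hm : m ≤ n) {j : ℤ} (hj : j ∈ s) :
    (swInvariant n s a q).coeff ((n - 2 * m + 2 * j : ℤ), 2 * j * q) =
      (-1) ^ (m + n) * n.choose m * a j := by
  have hinj : Set.InjOn (fun p : ℕ × ℤ => ((n - 2 * p.1 + 2 * p.2 : ℤ), 2 * p.2 * q))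
      ↑(range (n + 1) ×ˢ s) := by
    rintro ⟨m₁, j₁⟩ - ⟨m₂, j₂⟩ - h
    simp only [Prod.mk.injEq, mul_left_inj' hq] at h
    ext <;> simp <;> omega
  rw [swInvariant_eq_sum]
  exact coeff_sum_single_of_injOn hinj (fun p => (-1) ^ (p.1 + n) * n.choose p.1 * a p.2)
    (i := (m, j)) (mem_product.2 ⟨mem_range.2 (by omega), hj⟩)

theorem index_diffSpan_swInvariant_one_ne_zero {n : ℕ} (hn : n ≠ 0) {s : Finset ℤ} {a : ℤ → ℤ}
    {j j' : ℤ} (hj : j ∈ s) (hj' : j' ∈ s) (ha : a j ≠ 0) (ha' : a j' ≠ 0) (hjj' : j ≠ j') :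
    (diffSpan (swInvariant n s a 1)).index ≠ 0 := by
  have hcoeff : ∀ {m : ℕ} {i : ℤ}, m ≤ n → i ∈ s → a i ≠ 0 →
      (swInvariant n s a 1).coeff ((n - 2 * m + 2 * i : ℤ), 2 * i * 1) ≠ 0 := by
    intro m i hm hi hai
    rw [coeff_swInvariant a one_ne_zero hm hi]
    have hchoose : (n.choose m : ℤ) ≠ 0 := by exact_mod_cast (Nat.choose_pos hm).ne'
    exact mul_ne_zero (mul_ne_zero (pow_ne_zero _ (by norm_num)) hchoose) hai
  have hm0 := hcoeff (Nat.zero_le n) hj ha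
  refine AddSubgroup.index_ne_zero_of_mem_of_mem two_ne_zero
    (mul_ne_zero two_ne_zero (sub_ne_zero.2 hjj')) (b := 2 * (j - j')) ?_ ?_
  · convert sub_mem_diffSpan hm0 (hcoeff (Nat.one_le_iff_ne_zero.2 hn) hj ha) using 1
    ext <;> simp
  · convert sub_mem_diffSpan hm0 (hcoeff (Nat.zero_le n) hj' ha') using 1
    ext <;> simp <;> ring

/-- Let `S_q := (X^{(-1,0)} − X^{(1,0)})^{2g} · ∑_{j=-g}^{g} a_j X^{(2j,2jq)}`
in `ℤ[ℤ × ℤ]`, where `g ≥ 1`, the coefficients `a_j` are symmetric and `a_g ≠ 0`.  If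
`q, q' ≥ 1` and some group automorphism `φ` of `ℤ × ℤ` induces a ring automorphism of
`ℤ[ℤ × ℤ]` carrying `S_{q'}` to `S_q`, then `q = q'`. -/
theorem aut_invariance_forces_q_eq
    (g : ℕ) (hg : 1 ≤ g) (a : ℤ → ℤ)
    (hsym : ∀ j : ℤ, a (-j) = a j) (htop : a (g : ℤ) ≠ 0)
    (q q' : ℤ) (hq : 1 ≤ q) (hq' : 1 ≤ q')
    (S S' : AddMonoidAlgebra ℤ (ℤ × ℤ))
    (hS : S = (AddMonoidAlgebra.of' ℤ (ℤ × ℤ) (-1, 0)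
              - AddMonoidAlgebra.of' ℤ (ℤ × ℤ) (1, 0)) ^ (2 * g)
            * ∑ j ∈ Finset.Icc (-(g : ℤ)) (g : ℤ),
                a j • AddMonoidAlgebra.of' ℤ (ℤ × ℤ) (2 * j, 2 * j * q))
    (hS' : S' = (AddMonoidAlgebra.of' ℤ (ℤ × ℤ) (-1, 0)
              - AddMonoidAlgebra.of' ℤ (ℤ × ℤ) (1, 0)) ^ (2 * g)
            * ∑ j ∈ Finset.Icc (-(g : ℤ)) (g : ℤ),
                a j • AddMonoidAlgebra.of' ℤ (ℤ × ℤ) (2 * j, 2 * j * q'))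
    (φ : (ℤ × ℤ) ≃+ (ℤ × ℤ))
    (hφ : AddMonoidAlgebra.domCongr ℤ ℤ φ S' = S) :
    q = q' := by
  change S = swInvariant (2 * g) (Icc (-(g : ℤ)) g) a q at hS
  change S' = swInvariant (2 * g) (Icc (-(g : ℤ)) g) a q' at hS'
  have hN : (diffSpan (swInvariant (2 * g) (Icc (-(g : ℤ)) g) a 1)).index ≠ 0 :=
    index_diffSpan_swInvariant_one_ne_zero (by omega) (j := g) (j' := -g)
      (by simp) (by simp) htop (by rwa [hsym]) (by omega)
  have hindex := index_diffSpan_domCongr φ S'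
  rw [hφ, hS, hS', index_diffSpan_swInvariant _ _ _ (show q ≠ 0 by omega),
    index_diffSpan_swInvariant _ _ _ (show q' ≠ 0 by omega)] at hindex
  have := Nat.eq_of_mul_eq_mul_left (Nat.pos_of_ne_zero hN) hindex
  omega
end
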